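/- arXiv:1705.05176 — 2 statements merged into one kernel-verified Lean document; each statement's English description precedes it below -/
import Mathlib

section
/- For every finite simple graph G on n vertices there exists a convex drawing σ* of G such that cr(σ*) ≥ cr(σ) for every convex drawing σ of G, and such that for every equivalence class X of the twin relation (where u and v are twins if they have the same neighborhood, N(u) = N(v)), the image σ*(X) is a set of consecutive positions (a cyclic interval) in ZMod n. -/
/-!
Start from a crossing-maximal drawing and make the twin classes consecutive one at a time.
For a twin class `C`, choose the twin `u ∈ C` whose edges cross the most edges avoiding `C`,
cut the circle at `u`, and move all of `C` to the front, keeping the order of the other vertices.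
Crossings between edges avoiding `C` are unchanged; every twin now crosses exactly what `u` crossed,
so crossings with exactly one edge at `C` do not decrease; and of the two ways of matching two
twins with two common neighbours at most one crosses in any drawing, while once `C` is
consecutive one of them always does. A class that was already consecutive stays so: it misses
`u`, so cutting at `u` makes it an interval of the linear order that is kept.
-/

/-- Two edges (as unordered pairs of vertices) share no endpoint, i.e. they are independent. -/
def Sym2Indep {V : Type*} (e f : Sym2 V) : Prop := ∀ x : V, x ∈ e → x ∉ f

/-- `M(G)`: the number of unordered pairs of edges of `G` that share no endpoint. -/
noncomputable def indepPairs {V : Type*} (G : SimpleGraph V) : ℕ :=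
  {p : Sym2 (Sym2 V) | ∃ e f : Sym2 V,
    p = s(e, f) ∧ e ∈ G.edgeSet ∧ f ∈ G.edgeSet ∧ Sym2Indep e f}.ncard

/-- `z` lies on the open cyclic arc from `x` to `y` in `ZMod n`. -/
def InArc {n : ℕ} (x y z : ZMod n) : Prop :=
  0 < (z - x).val ∧ (z - x).val < (y - x).val

/-- The independent edges `e` and `f` cross in the convex drawing `σ`:
their endpoints alternate in the cyclic order. -/
def ConvexCross {V : Type*} {n : ℕ} (σ : V → ZMod n) (e f : Sym2 V) : Prop :=
  Sym2Indep e f ∧ ∃ a b c d : V, e = s(a, b) ∧ f = s(c, d) ∧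
    Xor' (InArc (σ a) (σ b) (σ c)) (InArc (σ a) (σ b) (σ d))

/-- `cr(σ)`: the number of unordered pairs of edges of `G` that cross in the
convex drawing `σ`. -/
noncomputable def convexCr {V : Type*} {n : ℕ} (G : SimpleGraph V) (σ : V → ZMod n) : ℕ :=
  {p : Sym2 (Sym2 V) | ∃ e f : Sym2 V,
    p = s(e, f) ∧ e ∈ G.edgeSet ∧ f ∈ G.edgeSet ∧ ConvexCross σ e f}.ncard

/-- A set of positions in `ZMod n` is a cyclic interval, i.e. a set of consecutive
positions `{a, a+1, …, a+k}`. -/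
def IsCyclicInterval {n : ℕ} (S : Set (ZMod n)) : Prop :=
  ∃ (a : ZMod n) (k : ℕ), S = {z : ZMod n | ∃ j : ℕ, j ≤ k ∧ z = a + (j : ZMod n)}

open Finset Function

section CyclicOrder

variable {n : ℕ}

def ChordsCross (a b c d : ZMod n) : Prop :=
  Xor (InArc a b c) (InArc a b d)

lemma chordsCross_swap_right {a b c d : ZMod n} : ChordsCross a b c d ↔ ChordsCross a b d c := by
  rw [ChordsCross, ChordsCross, xor_comm]

variable [NeZero n]

lemma ZMod.val_sub_eq_ite (a b : ZMod n) :
    (a - b).val = if b.val ≤ a.val then a.val - b.val else a.val + n - b.val := by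
  split_ifs with h
  · exact ZMod.val_sub h
  · have hsum := ZMod.val_add (a - b) b
    rw [sub_add_cancel] at hsum
    have := (a - b).val_lt
    rcases lt_or_ge ((a - b).val + b.val) n with hlt | hge
    · rw [Nat.mod_eq_of_lt hlt] at hsum
      omega
    · rw [← Nat.sub_add_cancel hge, Nat.add_mod_right,
        Nat.mod_eq_of_lt (by have := b.val_lt; omega)] at hsum
      omega

lemma inArc_iff (x y z : ZMod n) :
    InArc x y z ↔ x.val < z.val ∧ z.val < y.val ∨ y.val < x.val ∧ x.val < z.val ∨
      z.val < y.val ∧ y.val < x.val := by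
  have := x.val_lt
  have := y.val_lt
  have := z.val_lt
  rw [InArc, ZMod.val_sub_eq_ite, ZMod.val_sub_eq_ite]
  split_ifs <;> omega

variable {a b c d : ZMod n}

lemma chordsCross_iff :
    ChordsCross a b c d ↔ Xor (a.val < c.val ∧ c.val < b.val ∨ b.val < a.val ∧ a.val < c.val ∨
      c.val < b.val ∧ b.val < a.val) (a.val < d.val ∧ d.val < b.val ∨ b.val < a.val ∧
      a.val < d.val ∨ d.val < b.val ∧ b.val < a.val) := by
  rw [ChordsCross, inArc_iff, inArc_iff]

lemma chordsCross_swap_left (hac : a ≠ c) (had : a ≠ d) (hbc : b ≠ c) (hbd : b ≠ d) :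
    ChordsCross a b c d ↔ ChordsCross b a c d := by
  rw [← ZMod.val_injective n |>.ne_iff] at hac had hbc hbd
  simp only [chordsCross_iff, Xor]
  omega

lemma chordsCross_comm (hac : a ≠ c) (had : a ≠ d) (hbc : b ≠ c) (hbd : b ≠ d) :
    ChordsCross a b c d ↔ ChordsCross c d a b := by
  rw [← ZMod.val_injective n |>.ne_iff] at hac had hbc hbd
  simp only [chordsCross_iff, Xor]
  omega

lemma not_chordsCross_and_chordsCross (hbd : b ≠ d) :
    ¬ (ChordsCross a b c d ∧ ChordsCross a d c b) := by
  rw [← ZMod.val_injective n |>.ne_iff] at hbd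
  simp only [chordsCross_iff, Xor]
  omega

lemma chordsCross_or_chordsCross_of_lt (hbd : b ≠ d) (hab : a.val < b.val)
    (had : a.val < d.val) (hcb : c.val < b.val) (hcd : c.val < d.val) :
    ChordsCross a b c d ∨ ChordsCross a d c b := by
  rw [← ZMod.val_injective n |>.ne_iff] at hbd
  simp only [chordsCross_iff, Xor]
  omega

lemma chordsCross_congr {ι : Type*} {f g : ι → ZMod n}
    (h : ∀ i j, (f i).val < (f j).val ↔ (g i).val < (g j).val) (i j k l : ι) :
    ChordsCross (f i) (f j) (f k) (f l) ↔ ChordsCross (g i) (g j) (g k) (g l) := by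
  simp only [chordsCross_iff, h]

end CyclicOrder

section Drawing

variable {V : Type*} {n : ℕ}

lemma sym2Indep_mk_iff {a b c d : V} :
    Sym2Indep s(a, b) s(c, d) ↔ a ≠ c ∧ a ≠ d ∧ b ≠ c ∧ b ≠ d := by
  simp only [Sym2Indep, Sym2.mem_iff]
  grind

lemma convexCross_sub_const (σ : V → ZMod n) (t : ZMod n) :
    ConvexCross (fun x => σ x - t) = ConvexCross σ := by
  have harc (x y z : ZMod n) : InArc (x - t) (y - t) (z - t) ↔ InArc x y z := by
    rw [InArc, InArc, sub_sub_sub_cancel_right, sub_sub_sub_cancel_right]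
  ext e f
  simp only [ConvexCross, harc]

variable [NeZero n]

lemma convexCross_congr {σ τ : V → ZMod n} {e f : Sym2 V}
    (h : ∀ x, (x ∈ e ∨ x ∈ f) → ∀ y, (y ∈ e ∨ y ∈ f) →
      ((σ x).val < (σ y).val ↔ (τ x).val < (τ y).val)) :
    ConvexCross σ e f ↔ ConvexCross τ e f := by
  let ι := {x // x ∈ e ∨ x ∈ f}
  have hι := chordsCross_congr (f := fun i : ι => σ i) (g := fun i : ι => τ i)
    fun i j => h i i.2 j j.2
  unfold ConvexCross
  refine and_congr_right fun _ => exists₄_congr fun a b c d => ?_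
  refine ⟨fun ⟨he, hf, hx⟩ => ⟨he, hf, ?_⟩, fun ⟨he, hf, hx⟩ => ⟨he, hf, ?_⟩⟩ <;> subst he hf
  · exact (hι ⟨a, by simp⟩ ⟨b, by simp⟩ ⟨c, by simp⟩ ⟨d, by simp⟩).1 hx
  · exact (hι ⟨a, by simp⟩ ⟨b, by simp⟩ ⟨c, by simp⟩ ⟨d, by simp⟩).2 hx

variable {σ : V → ZMod n}

lemma convexCross_mk_iff (hσ : Injective σ) {a b c d : V} :
    ConvexCross σ s(a, b) s(c, d) ↔
      (a ≠ c ∧ a ≠ d ∧ b ≠ c ∧ b ≠ d) ∧ ChordsCross (σ a) (σ b) (σ c) (σ d) := by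
  rw [ConvexCross, sym2Indep_mk_iff]
  refine and_congr_right fun ⟨hac, had, hbc, hbd⟩ => ⟨?_, fun h => ⟨a, b, c, d, rfl, rfl, h⟩⟩
  rintro ⟨a', b', c', d', he, hf, hx⟩
  have hswap := chordsCross_swap_left (d := σ d) (hσ.ne hac) (hσ.ne had) (hσ.ne hbc) (hσ.ne hbd)
  rw [Sym2.eq_iff] at he hf
  rcases he with ⟨rfl, rfl⟩ | ⟨rfl, rfl⟩ <;> rcases hf with ⟨rfl, rfl⟩ | ⟨rfl, rfl⟩
  · exact hx
  · exact chordsCross_swap_right.1 hx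
  · exact hswap.2 hx
  · exact hswap.2 (chordsCross_swap_right.1 hx)

lemma convexCross_comm (hσ : Injective σ) (e f : Sym2 V) :
    ConvexCross σ e f ↔ ConvexCross σ f e := by
  suffices h : ∀ e f, ConvexCross σ e f → ConvexCross σ f e from ⟨h e f, h f e⟩
  intro e f
  induction e using Sym2.inductionOn with | hf a b =>
  induction f using Sym2.inductionOn with | hf c d =>
  rw [convexCross_mk_iff hσ, convexCross_mk_iff hσ]
  rintro ⟨⟨h₁, h₂, h₃, h₄⟩, hx⟩
  exact ⟨⟨h₁.symm, h₃.symm, h₂.symm, h₄.symm⟩,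
    (chordsCross_comm (hσ.ne h₁) (hσ.ne h₂) (hσ.ne h₃) (hσ.ne h₄)).1 hx⟩

end Drawing

section TwinSets

variable {V : Type*} {G : SimpleGraph V} {C : Finset V}

def IsTwinSet (G : SimpleGraph V) (C : Finset V) : Prop :=
  ∀ w ∈ C, ∀ w' ∈ C, ∀ x, G.Adj w x ↔ G.Adj w' x

lemma IsTwinSet.not_adj (hC : IsTwinSet G C) {w w' : V} (hw : w ∈ C) (hw' : w' ∈ C) :
    ¬ G.Adj w w' :=
  fun h => G.irrefl ((hC w' hw' w hw w).1 h.symm)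

lemma IsTwinSet.notMem_of_adj (hC : IsTwinSet G C) {w x : V} (hw : w ∈ C) (h : G.Adj w x) :
    x ∉ C :=
  fun hx => hC.not_adj hw hx h

lemma exists_mem_adj_eq_mk {e : Sym2 V} (he : e ∈ G.edgeSet)
    (hm : ∃ y ∈ e, y ∈ C) : ∃ w x, w ∈ C ∧ G.Adj w x ∧ e = s(w, x) := by
  induction e using Sym2.inductionOn with | hf a b =>
  obtain ⟨y, hy, hyC⟩ := hm
  rcases Sym2.mem_iff.1 hy with rfl | rfl
  · exact ⟨y, b, hyC, he, rfl⟩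
  · exact ⟨y, a, hyC, G.adj_symm he, Sym2.eq_swap⟩

lemma eq_and_eq_of_mk_eq_mk {a b w x : V} (ha : a ∈ C) (hx : x ∉ C) (h : s(a, b) = s(w, x)) :
    a = w ∧ b = x := by
  rcases Sym2.eq_iff.1 h with h | ⟨rfl, -⟩
  · exact h
  · exact absurd ha hx

end TwinSets

section Counting

variable {V : Type*} [Fintype V] {n : ℕ}

open Classical in
noncomputable def crossingPairs (G : SimpleGraph V) (σ : V → ZMod n) : Finset (Sym2 (Sym2 V)) :=
  {p | ∃ e f, p = s(e, f) ∧ e ∈ G.edgeSet ∧ f ∈ G.edgeSet ∧ ConvexCross σ e f}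

open Classical in
noncomputable def crossingPairsOff (G : SimpleGraph V) (σ : V → ZMod n) (C : Finset V) :
    Finset (Sym2 (Sym2 V)) :=
  (crossingPairs G σ).filter fun p => ∀ e ∈ p, ∀ x ∈ e, x ∉ C

open Classical in
noncomputable def crossingPairsMixed (G : SimpleGraph V) (σ : V → ZMod n) (C : Finset V) :
    Finset (Sym2 (Sym2 V)) :=
  (crossingPairs G σ).filter fun p => (∃ e ∈ p, ∃ x ∈ e, x ∈ C) ∧ ∃ e ∈ p, ∀ x ∈ e, x ∉ C

open Classical in
noncomputable def crossingPairsAt (G : SimpleGraph V) (σ : V → ZMod n) (C : Finset V) :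
    Finset (Sym2 (Sym2 V)) :=
  (crossingPairs G σ).filter fun p => ∀ e ∈ p, ∃ x ∈ e, x ∈ C

open Classical in
noncomputable def starCrossings (G : SimpleGraph V) (σ : V → ZMod n) (C : Finset V) (w : V) :
    Finset (V × Sym2 V) :=
  {t | G.Adj w t.1 ∧ t.2 ∈ G.edgeSet ∧ (∀ z ∈ t.2, z ∉ C) ∧ ConvexCross σ s(w, t.1) t.2}

open Classical in
noncomputable def crossingDartPairsAt (G : SimpleGraph V) (σ : V → ZMod n) (C : Finset V) :
    Finset ((V × V) × (V × V)) :=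
  {q | q.1.1 ∈ C ∧ q.2.1 ∈ C ∧ G.Adj q.1.1 q.1.2 ∧ G.Adj q.2.1 q.2.2 ∧
    ConvexCross σ s(q.1.1, q.1.2) s(q.2.1, q.2.2)}

variable {G : SimpleGraph V} {C : Finset V} {σ τ : V → ZMod n}

lemma mem_crossingPairs {p : Sym2 (Sym2 V)} : p ∈ crossingPairs G σ ↔
    ∃ e f, p = s(e, f) ∧ e ∈ G.edgeSet ∧ f ∈ G.edgeSet ∧ ConvexCross σ e f := by
  simp [crossingPairs]

lemma mem_starCrossings {w x : V} {f : Sym2 V} : (x, f) ∈ starCrossings G σ C w ↔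
    G.Adj w x ∧ f ∈ G.edgeSet ∧ (∀ z ∈ f, z ∉ C) ∧ ConvexCross σ s(w, x) f := by
  simp [starCrossings]

lemma mem_crossingDartPairsAt {w x w' y : V} : ((w, x), (w', y)) ∈ crossingDartPairsAt G σ C ↔
    w ∈ C ∧ w' ∈ C ∧ G.Adj w x ∧ G.Adj w' y ∧ ConvexCross σ s(w, x) s(w', y) := by
  simp [crossingDartPairsAt]

lemma convexCr_eq_card_crossingPairs (G : SimpleGraph V) (σ : V → ZMod n) :
    convexCr G σ = #(crossingPairs G σ) := by
  rw [convexCr, ← Set.ncard_coe_finset]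
  congr 1
  ext p
  exact mem_crossingPairs.symm

lemma card_crossingPairs_eq_add (G : SimpleGraph V) (σ : V → ZMod n) (C : Finset V) :
    #(crossingPairs G σ) =
      #(crossingPairsOff G σ C) + #(crossingPairsMixed G σ C) + #(crossingPairsAt G σ C) := by
  classical
  rw [add_assoc, ← card_filter_add_card_filter_not (s := crossingPairs G σ)
    (fun p => ∀ e ∈ p, ∀ x ∈ e, x ∉ C)]
  congr 1
  rw [← card_filter_add_card_filter_not (s := filter _ _) (fun p => ∀ e ∈ p, ∃ x ∈ e, x ∈ C),
    filter_filter, filter_filter, add_comm, crossingPairsMixed, crossingPairsAt]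
  congr 2 <;> apply filter_congr <;> intro p _ <;> induction p using Sym2.inductionOn <;>
    simp only [Sym2.mem_iff, forall_eq_or_imp, forall_eq, exists_eq_or_imp, exists_eq_left] <;>
    grind

lemma starCrossings_sub_const (t : ZMod n) (w : V) :
    starCrossings G (fun x => σ x - t) C w = starCrossings G σ C w := by
  ext ⟨x, f⟩
  simp only [mem_starCrossings, convexCross_sub_const]

end Counting

section Gathering

variable {V : Type*} [Fintype V] {n : ℕ} [NeZero n]
  {G : SimpleGraph V} {C : Finset V} {σ τ : V → ZMod n}

lemma crossingPairsOff_eq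
    (hord : ∀ x ∉ C, ∀ y ∉ C, (σ x).val < (σ y).val ↔ (τ x).val < (τ y).val) :
    crossingPairsOff G σ C = crossingPairsOff G τ C := by
  classical
  ext p
  simp only [crossingPairsOff, mem_filter, mem_crossingPairs]
  refine and_congr_left fun hoff => exists₂_congr fun e f => and_congr_right fun hp =>
    and_congr_right fun _ => and_congr_right fun _ => ?_
  subst hp
  have hoff' : ∀ x, x ∈ e ∨ x ∈ f → x ∉ C := by
    rintro x (hx | hx)
    exacts [hoff e (Sym2.mem_mk_left _ _) x hx, hoff f (Sym2.mem_mk_right _ _) x hx]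
  exact convexCross_congr fun x hx y hy => hord x (hoff' x hx) y (hoff' y hy)

lemma card_crossingPairsMixed (hC : IsTwinSet G C) (hσ : Injective σ) :
    #(crossingPairsMixed G σ C) = ∑ w ∈ C, #(starCrossings G σ C w) := by
  classical
  rw [← card_sigma]
  refine (card_bij (fun q _ => s(s(q.1, q.2.1), q.2.2)) ?_ ?_ ?_).symm
  · rintro ⟨w, x, f⟩ hq
    obtain ⟨hw, hwx, hf, hoff, hx⟩ := mem_sigma.1 hq |>.imp_right mem_starCrossings.1
    simp only [crossingPairsMixed, mem_filter, mem_crossingPairs]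
    exact ⟨⟨_, _, rfl, hwx, hf, hx⟩, ⟨_, Sym2.mem_mk_left _ _, w, Sym2.mem_mk_left _ _, hw⟩,
      ⟨f, Sym2.mem_mk_right _ _, hoff⟩⟩
  · rintro ⟨w, x, f⟩ hq ⟨w', x', f'⟩ hq' heq
    dsimp only at heq
    obtain ⟨hw, hwx, -, -, -⟩ := mem_sigma.1 hq |>.imp_right mem_starCrossings.1
    obtain ⟨hw', hwx', -, hoff', -⟩ := mem_sigma.1 hq' |>.imp_right mem_starCrossings.1
    rcases Sym2.eq_iff.1 heq with ⟨he, rfl⟩ | ⟨he, -⟩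
    · obtain ⟨rfl, rfl⟩ := eq_and_eq_of_mk_eq_mk hw (hC.notMem_of_adj hw' hwx') he
      rfl
    · exact absurd hw (hoff' w (he ▸ Sym2.mem_mk_left _ _))
  · intro p hp
    simp only [crossingPairsMixed, mem_filter, mem_crossingPairs] at hp
    obtain ⟨⟨e, f, rfl, he, hf, hx⟩, htouch, hoff⟩ := hp
    simp only [Sym2.mem_iff, exists_eq_or_imp, exists_eq_left] at htouch hoff
    have hit : ∀ e f, e ∈ G.edgeSet → f ∈ G.edgeSet → ConvexCross σ e f → (∃ y ∈ e, y ∈ C) →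
        (∀ y ∈ f, y ∉ C) →
        ∃ q, ∃ _ : q ∈ C.sigma (starCrossings G σ C), s(s(q.1, q.2.1), q.2.2) = s(e, f) := by
      intro e f he hf hx ht ho
      obtain ⟨w, x, hw, hwx, rfl⟩ := exists_mem_adj_eq_mk he ht
      exact ⟨⟨w, x, f⟩, mem_sigma.2 ⟨hw, mem_starCrossings.2 ⟨hwx, hf, ho, hx⟩⟩, rfl⟩
    rcases htouch with ⟨y, hy, hyC⟩ | ⟨y, hy, hyC⟩ <;> rcases hoff with ho | ho
    · exact absurd hyC (ho y hy)
    · exact hit e f he hf hx ⟨y, hy, hyC⟩ ho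
    · obtain ⟨q, hq, hqe⟩ := hit f e hf he ((convexCross_comm hσ e f).1 hx) ⟨y, hy, hyC⟩ ho
      exact ⟨q, hq, hqe.trans Sym2.eq_swap⟩
    · exact absurd hyC (ho y hy)

lemma starCrossings_eq (hC : IsTwinSet G C) (hσ : Injective σ) (hτ : Injective τ) {u w : V}
    (hu : u ∈ C) (hw : w ∈ C) (hσu : ∀ y ∉ C, (σ u).val < (σ y).val)
    (hτw : ∀ y ∉ C, (τ w).val < (τ y).val)
    (hord : ∀ x ∉ C, ∀ y ∉ C, (σ x).val < (σ y).val ↔ (τ x).val < (τ y).val) :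
    starCrossings G τ C w = starCrossings G σ C u := by
  ext ⟨x, f⟩
  induction f using Sym2.inductionOn with | hf c d =>
  simp only [mem_starCrossings, hC w hw u hu x]
  by_cases hx : x ∈ C
  · simp only [hC.not_adj hu hx, false_and]
  refine and_congr_right fun _ => and_congr_right fun _ => and_congr_right fun hoff => ?_
  have hc : c ∉ C := hoff c (Sym2.mem_mk_left _ _)
  have hd : d ∉ C := hoff d (Sym2.mem_mk_right _ _)
  have hne {v : V} (hv : v ∈ C) : v ≠ c ∧ v ≠ d :=
    ⟨fun h => hc (h ▸ hv), fun h => hd (h ▸ hv)⟩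
  obtain ⟨hwc, hwd⟩ := hne hw
  obtain ⟨huc, hud⟩ := hne hu
  simp only [convexCross_mk_iff hτ, convexCross_mk_iff hσ, hwc, hwd, huc, hud, ne_eq,
    not_false_eq_true, true_and]
  refine and_congr_right fun _ => ?_
  -- `none` stands for `w`, resp. `u`: in both drawings it precedes every vertex outside `C`.
  let f : Option {y // y ∉ C} → ZMod n := fun i => i.elim (τ w) (fun y => τ y)
  let g : Option {y // y ∉ C} → ZMod n := fun i => i.elim (σ u) (fun y => σ y)
  refine chordsCross_congr (f := f) (g := g) ?_ none (some ⟨x, hx⟩) (some ⟨c, hc⟩) (some ⟨d, hd⟩)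
  rintro (_ | ⟨i, hi⟩) (_ | ⟨j, hj⟩)
  · exact iff_of_false (lt_irrefl _) (lt_irrefl _)
  · exact iff_of_true (hτw j hj) (hσu j hj)
  · exact iff_of_false (hτw i hi).not_gt (hσu i hi).not_gt
  · exact (hord i hi j hj).symm

lemma card_crossingDartPairsAt (hC : IsTwinSet G C) (hσ : Injective σ) :
    #(crossingDartPairsAt G σ C) = 2 * #(crossingPairsAt G σ C) := by
  classical
  let π : (V × V) × (V × V) → Sym2 (Sym2 V) := fun q => s(s(q.1.1, q.1.2), s(q.2.1, q.2.2))
  have hπ : ∀ q ∈ crossingDartPairsAt G σ C, π q ∈ crossingPairsAt G σ C := by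
    rintro ⟨⟨w, x⟩, w', y⟩ hq
    obtain ⟨hw, hw', hwx, hw'y, hx⟩ := mem_crossingDartPairsAt.1 hq
    simp only [π, crossingPairsAt, mem_filter, mem_crossingPairs]
    refine ⟨⟨_, _, rfl, hwx, hw'y, hx⟩, ?_⟩
    simp only [Sym2.mem_iff, forall_eq_or_imp, forall_eq]
    exact ⟨⟨w, .inl rfl, hw⟩, ⟨w', .inl rfl, hw'⟩⟩
  rw [card_eq_sum_card_fiberwise hπ, mul_comm, ← smul_eq_mul, ← sum_const]
  refine sum_congr rfl fun p hp => ?_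
  simp only [crossingPairsAt, mem_filter, mem_crossingPairs] at hp
  obtain ⟨⟨e, f, rfl, he, hf, hx⟩, hat⟩ := hp
  obtain ⟨w, x, hw, hwx, rfl⟩ := exists_mem_adj_eq_mk he (hat _ (Sym2.mem_mk_left _ _))
  obtain ⟨w', y, hw', hw'y, rfl⟩ := exists_mem_adj_eq_mk hf (hat _ (Sym2.mem_mk_right _ _))
  have hww' : w ≠ w' := ((convexCross_mk_iff hσ).1 hx).1.1
  rw [card_eq_two]
  refine ⟨((w, x), (w', y)), ((w', y), (w, x)), by simp [hww'], ?_⟩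
  ext ⟨⟨a, b⟩, c, d⟩
  simp only [mem_filter, mem_crossingDartPairsAt, mem_insert, mem_singleton, Prod.mk.injEq, π]
  constructor
  · rintro ⟨⟨ha, hc, hab, hcd, -⟩, hp⟩
    have hx : x ∉ C := hC.notMem_of_adj hw hwx
    have hy : y ∉ C := hC.notMem_of_adj hw' hw'y
    rcases Sym2.eq_iff.1 hp with ⟨h₁, h₂⟩ | ⟨h₁, h₂⟩
    · exact .inl ⟨eq_and_eq_of_mk_eq_mk ha hx h₁, eq_and_eq_of_mk_eq_mk hc hy h₂⟩
    · exact .inr ⟨eq_and_eq_of_mk_eq_mk ha hy h₁, eq_and_eq_of_mk_eq_mk hc hx h₂⟩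
  · rintro (⟨⟨rfl, rfl⟩, rfl, rfl⟩ | ⟨⟨rfl, rfl⟩, rfl, rfl⟩)
    · exact ⟨⟨hw, hw', hwx, hw'y, hx⟩, rfl⟩
    · exact ⟨⟨hw', hw, hw'y, hwx, (convexCross_comm hσ _ _).1 hx⟩, Sym2.eq_swap⟩

lemma swap_notMem_crossingDartPairsAt (hσ : Injective σ) {w x w' y : V}
    (h : ((w, x), (w', y)) ∈ crossingDartPairsAt G σ C) :
    ((w, y), (w', x)) ∉ crossingDartPairsAt G σ C := by
  intro h'
  obtain ⟨-, -, -, -, hx⟩ := mem_crossingDartPairsAt.1 h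
  obtain ⟨-, -, -, -, hx'⟩ := mem_crossingDartPairsAt.1 h'
  rw [convexCross_mk_iff hσ] at hx hx'
  exact not_chordsCross_and_chordsCross (hσ.ne hx.1.2.2.2) ⟨hx.2, hx'.2⟩

/-- The two ways of matching two twins with two common neighbours cannot both fail to cross
when the twins come first. -/
lemma swap_mem_crossingDartPairsAt (hC : IsTwinSet G C) (hσ : Injective σ) (hτ : Injective τ)
    (hτC : ∀ w ∈ C, ∀ y ∉ C, (τ w).val < (τ y).val) {w x w' y : V}
    (h : ((w, x), (w', y)) ∈ crossingDartPairsAt G σ C) (hτx : ¬ ConvexCross τ s(w, x) s(w', y)) :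
    ((w, y), (w', x)) ∈ crossingDartPairsAt G τ C := by
  obtain ⟨hw, hw', hwx, hw'y, hx⟩ := mem_crossingDartPairsAt.1 h
  have hwy : G.Adj w y := (hC w hw w' hw' y).2 hw'y
  have hw'x : G.Adj w' x := (hC w' hw' w hw x).2 hwx
  have hx' : x ∉ C := hC.notMem_of_adj hw hwx
  have hy : y ∉ C := hC.notMem_of_adj hw' hw'y
  obtain ⟨⟨hww', -, -, hxy⟩, -⟩ := (convexCross_mk_iff hσ).1 hx
  refine mem_crossingDartPairsAt.2 ⟨hw, hw', hwy, hw'x, (convexCross_mk_iff hτ).2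
    ⟨⟨hww', hwx.ne, hw'y.ne.symm, hxy.symm⟩, ?_⟩⟩
  refine (chordsCross_or_chordsCross_of_lt (hτ.ne hxy) (hτC w hw x hx') (hτC w hw y hy)
    (hτC w' hw' x hx') (hτC w' hw' y hy)).resolve_left fun h => hτx ?_
  exact (convexCross_mk_iff hτ).2 ⟨⟨hww', hwy.ne, hw'x.ne.symm, hxy⟩, h⟩

lemma card_crossingDartPairsAt_le (hC : IsTwinSet G C) (hσ : Injective σ) (hτ : Injective τ)
    (hτC : ∀ w ∈ C, ∀ y ∉ C, (τ w).val < (τ y).val) :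
    #(crossingDartPairsAt G σ C) ≤ #(crossingDartPairsAt G τ C) := by
  classical
  let F : (V × V) × (V × V) → (V × V) × (V × V) := fun q =>
    if ConvexCross τ s(q.1.1, q.1.2) s(q.2.1, q.2.2) then q
    else ((q.1.1, q.2.2), (q.2.1, q.1.2))
  refine card_le_card_of_injOn F ?_ ?_
  · rintro ⟨⟨w, x⟩, w', y⟩ hq
    rw [mem_coe] at hq ⊢
    by_cases hτx : ConvexCross τ s(w, x) s(w', y)
    · obtain ⟨hw, hw', hwx, hw'y, -⟩ := mem_crossingDartPairsAt.1 hq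
      simpa only [F, if_pos hτx] using mem_crossingDartPairsAt.2 ⟨hw, hw', hwx, hw'y, hτx⟩
    · simpa only [F, if_neg hτx] using swap_mem_crossingDartPairsAt hC hσ hτ hτC hq hτx
  · rintro ⟨⟨w₁, x₁⟩, w₁', y₁⟩ hq₁ ⟨⟨w₂, x₂⟩, w₂', y₂⟩ hq₂ heq
    rw [mem_coe] at hq₁ hq₂
    simp only [F] at heq
    split_ifs at heq
    · exact heq
    · rw [heq] at hq₁
      exact absurd hq₁ (swap_notMem_crossingDartPairsAt hσ hq₂)
    · rw [← heq] at hq₂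
      exact absurd hq₂ (swap_notMem_crossingDartPairsAt hσ hq₁)
    · simp only [Prod.mk.injEq] at heq ⊢
      tauto

theorem convexCr_le_of_gathered (hC : IsTwinSet G C) (hσ : Injective σ) (hτ : Injective τ)
    {u : V} (hu : u ∈ C) (hmax : ∀ w ∈ C, #(starCrossings G σ C w) ≤ #(starCrossings G σ C u))
    (hσu : ∀ y ∉ C, (σ u).val < (σ y).val) (hτC : ∀ w ∈ C, ∀ y ∉ C, (τ w).val < (τ y).val)
    (hord : ∀ x ∉ C, ∀ y ∉ C, (σ x).val < (σ y).val ↔ (τ x).val < (τ y).val) :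
    convexCr G σ ≤ convexCr G τ := by
  rw [convexCr_eq_card_crossingPairs, convexCr_eq_card_crossingPairs,
    card_crossingPairs_eq_add G σ C, card_crossingPairs_eq_add G τ C, crossingPairsOff_eq hord]
  refine add_le_add (add_le_add le_rfl ?_) ?_
  · rw [card_crossingPairsMixed hC hσ, card_crossingPairsMixed hC hτ]
    refine sum_le_sum fun w hw => ?_
    rw [starCrossings_eq hC hσ hτ hu hw hσu (hτC w hw) hord]
    exact hmax w hw
  · have := card_crossingDartPairsAt hC hσ
    have := card_crossingDartPairsAt hC hτ
    have := card_crossingDartPairsAt_le hC hσ hτ hτC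
    omega

end Gathering

section KeyRank

variable {V α : Type*} [Fintype V] [LinearOrder α] {f : V → α} {x y : V}

def keyRank (f : V → α) (x : V) : ℕ := #{y | f y < f x}

lemma keyRank_lt_card (f : V → α) (x : V) : keyRank f x < Fintype.card V :=
  card_lt_card (filter_ssubset.2 ⟨x, mem_univ _, lt_irrefl _⟩)

lemma keyRank_lt_keyRank (h : f x < f y) : keyRank f x < keyRank f y :=
  card_lt_card ((ssubset_iff_of_subset fun z hz => by
    simp only [mem_filter, mem_univ, true_and] at hz ⊢
    exact hz.trans h).2 ⟨x, by simpa using h, by simp⟩)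

lemma keyRank_lt_keyRank_iff (hf : Injective f) : keyRank f x < keyRank f y ↔ f x < f y := by
  refine ⟨fun h => ?_, keyRank_lt_keyRank⟩
  rcases lt_trichotomy (f x) (f y) with hlt | heq | hgt
  · exact hlt
  · exact absurd h (hf heq ▸ lt_irrefl _)
  · exact absurd (keyRank_lt_keyRank hgt) h.not_gt

lemma keyRank_le_keyRank_iff (hf : Injective f) : keyRank f x ≤ keyRank f y ↔ f x ≤ f y := by
  simpa only [not_lt] using (keyRank_lt_keyRank_iff hf (x := y) (y := x)).not

lemma keyRank_injective (hf : Injective f) : Injective (keyRank f) := fun _ _ h =>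
  hf (le_antisymm ((keyRank_le_keyRank_iff hf).1 h.le) ((keyRank_le_keyRank_iff hf).1 h.ge))

lemma exists_keyRank_eq (hf : Injective f) {i : ℕ} (hi : i < Fintype.card V) :
    ∃ x, keyRank f x = i := by
  let g : V → Fin (Fintype.card V) := fun x => ⟨keyRank f x, keyRank_lt_card f x⟩
  have hg : Bijective g := (Fintype.bijective_iff_injective_and_card g).2
    ⟨fun x y h => keyRank_injective hf (Fin.ext_iff.1 h), (Fintype.card_fin _).symm⟩
  obtain ⟨x, hx⟩ := hg.2 ⟨i, hi⟩
  exact ⟨x, Fin.ext_iff.1 hx⟩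

lemma keyRank_image_eq_Icc (hf : Injective f) {S : Set V} {lo hi : V}
    (hS : ∀ y, y ∈ S ↔ f lo ≤ f y ∧ f y ≤ f hi) :
    keyRank f '' S = Set.Icc (keyRank f lo) (keyRank f hi) := by
  ext i
  simp only [Set.mem_image, Set.mem_Icc, hS]
  constructor
  · rintro ⟨y, ⟨h₁, h₂⟩, rfl⟩
    exact ⟨(keyRank_le_keyRank_iff hf).2 h₁, (keyRank_le_keyRank_iff hf).2 h₂⟩
  · rintro ⟨h₁, h₂⟩
    obtain ⟨y, rfl⟩ := exists_keyRank_eq hf (h₂.trans_lt (keyRank_lt_card f hi))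
    exact ⟨y, ⟨(keyRank_le_keyRank_iff hf).1 h₁, (keyRank_le_keyRank_iff hf).1 h₂⟩, rfl⟩

end KeyRank

section CyclicInterval

variable {n : ℕ}

lemma isCyclicInterval_natCast_image_Icc {a b : ℕ} (hab : a ≤ b) :
    IsCyclicInterval ((Nat.cast : ℕ → ZMod n) '' Set.Icc a b) := by
  refine ⟨a, b - a, ?_⟩
  ext z
  simp only [Set.mem_image, Set.mem_Icc, Set.mem_ofPred_eq]
  constructor
  · rintro ⟨i, ⟨h₁, h₂⟩, rfl⟩
    exact ⟨i - a, by omega, by rw [Nat.cast_sub h₁]; ring⟩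
  · rintro ⟨j, hj, rfl⟩
    exact ⟨a + j, ⟨by omega, by omega⟩, by push_cast; ring⟩

lemma IsCyclicInterval.image_sub_const {T : Set (ZMod n)} (hT : IsCyclicInterval T) (t : ZMod n) :
    IsCyclicInterval ((fun z => z - t) '' T) := by
  obtain ⟨a, k, rfl⟩ := hT
  refine ⟨a - t, k, ?_⟩
  ext z
  simp only [Set.mem_image, Set.mem_ofPred_eq]
  constructor
  · rintro ⟨_, ⟨j, hj, rfl⟩, rfl⟩
    exact ⟨j, hj, by ring⟩
  · rintro ⟨j, hj, rfl⟩
    exact ⟨a + j, ⟨j, hj, rfl⟩, by ring⟩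

/-- A cyclic interval avoiding `0` does not wrap around, so it is convex for `ZMod.val`. -/
lemma IsCyclicInterval.mem_of_val_le_of_le [NeZero n] {T : Set (ZMod n)} (hT : IsCyclicInterval T)
    (h0 : (0 : ZMod n) ∉ T) {s t z : ZMod n} (hs : s ∈ T) (ht : t ∈ T) (hsz : s.val ≤ z.val)
    (hzt : z.val ≤ t.val) : z ∈ T := by
  obtain ⟨a, k, rfl⟩ := hT
  have hk : a.val + k < n := by
    by_contra! hk
    have h : (a.val : ZMod n) + ((n - a.val : ℕ) : ZMod n) = 0 := by
      rw [← Nat.cast_add, Nat.add_sub_cancel' a.val_lt.le, ZMod.natCast_self]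
    rw [ZMod.natCast_zmod_val] at h
    exact h0 ⟨n - a.val, by omega, h.symm⟩
  have hval {j : ℕ} (hj : j ≤ k) : (a + j).val = a.val + j := by
    rw [ZMod.val_add_of_lt] <;> rw [ZMod.val_cast_of_lt (by omega)]
    omega
  obtain ⟨i, hi, rfl⟩ := hs
  obtain ⟨j, hj, rfl⟩ := ht
  rw [hval hi] at hsz
  rw [hval hj] at hzt
  refine ⟨z.val - a.val, by omega, ZMod.val_injective n ?_⟩
  rw [hval (by omega)]
  omega

lemma isCyclicInterval_image_keyRank {V α : Type*} [Fintype V] [LinearOrder α] {f : V → α}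
    (hf : Injective f) {S : Set V} (hS : S.Nonempty)
    (hconv : ∀ x ∈ S, ∀ z ∈ S, ∀ y, f x ≤ f y → f y ≤ f z → y ∈ S) :
    IsCyclicInterval ((fun x => (keyRank f x : ZMod n)) '' S) := by
  obtain ⟨lo, hlo, hlo_le⟩ := Set.exists_min_image S f S.toFinite hS
  obtain ⟨hi, hhi, le_hhi⟩ := Set.exists_max_image S f S.toFinite hS
  have hS' (y : V) : y ∈ S ↔ f lo ≤ f y ∧ f y ≤ f hi :=
    ⟨fun hy => ⟨hlo_le y hy, le_hhi y hy⟩, fun h => hconv lo hlo hi hhi y h.1 h.2⟩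
  rw [← Set.image_image Nat.cast (keyRank f), keyRank_image_eq_Icc hf hS']
  exact isCyclicInterval_natCast_image_Icc ((keyRank_le_keyRank_iff hf).2 (hlo_le hi hhi))

end CyclicInterval

section GatherDrawing

variable {V : Type*} {n : ℕ} {σ : V → ZMod n} {C : Finset V} {u x : V}

open Classical in
/-- Positions read cyclically starting from `σ u`, with the vertices of `C` put in front. -/
noncomputable def gatherKey (σ : V → ZMod n) (C : Finset V) (u x : V) : ℕ :=
  if x ∈ C then (σ x - σ u).val else n + (σ x - σ u).val

lemma gatherKey_of_notMem (hx : x ∉ C) : gatherKey σ C u x = n + (σ x - σ u).val := by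
  simp [gatherKey, hx]

lemma gatherKey_lt_of_mem [NeZero n] (hx : x ∈ C) : gatherKey σ C u x < n := by
  simpa [gatherKey, hx] using ZMod.val_lt _

lemma gatherKey_injective [NeZero n] (hσ : Injective σ) : Injective (gatherKey σ C u) := by
  intro x y h
  have := (σ x - σ u).val_lt
  have := (σ y - σ u).val_lt
  have hval : (σ x - σ u).val = (σ y - σ u).val := by
    unfold gatherKey at h
    split_ifs at h <;> omega
  exact hσ (sub_left_injective (ZMod.val_injective n hval))

variable [Fintype V]

noncomputable def gatherDrawing (σ : V → ZMod n) (C : Finset V) (u : V) (x : V) : ZMod n :=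
  keyRank (gatherKey σ C u) x

lemma val_gatherDrawing (hn : Fintype.card V ≤ n) (x : V) :
    (gatherDrawing σ C u x).val = keyRank (gatherKey σ C u) x :=
  ZMod.val_cast_of_lt ((keyRank_lt_card _ x).trans_le hn)

variable [NeZero n]

lemma gatherDrawing_injective (hn : Fintype.card V ≤ n) (hσ : Injective σ) :
    Injective (gatherDrawing σ C u) := fun x y h =>
  keyRank_injective (gatherKey_injective hσ)
    (by rw [← val_gatherDrawing hn, ← val_gatherDrawing hn, h])

lemma convexCr_le_convexCr_gatherDrawing {G : SimpleGraph V} (hn : Fintype.card V ≤ n)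
    (hC : IsTwinSet G C) (hσ : Injective σ) (hu : u ∈ C)
    (hmax : ∀ w ∈ C, #(starCrossings G σ C w) ≤ #(starCrossings G σ C u)) :
    convexCr G σ ≤ convexCr G (gatherDrawing σ C u) := by
  have hρ : Injective fun x => σ x - σ u := fun x y h => hσ (sub_left_injective h)
  have hkey := gatherKey_injective (C := C) (u := u) hσ
  have hval := val_gatherDrawing (σ := σ) (C := C) (u := u) hn
  calc convexCr G σ = convexCr G (fun x => σ x - σ u) := by
        simp only [convexCr, convexCross_sub_const]
    _ ≤ _ := convexCr_le_of_gathered hC hρ (gatherDrawing_injective hn hσ) hu ?_ ?_ ?_ ?_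
  · simpa only [starCrossings_sub_const] using hmax
  · intro y hy
    rw [sub_self, ZMod.val_zero, ZMod.val_pos, sub_ne_zero]
    exact hσ.ne fun h => hy (h ▸ hu)
  · intro w hw y hy
    rw [hval, hval, keyRank_lt_keyRank_iff hkey, gatherKey_of_notMem hy]
    exact (gatherKey_lt_of_mem hw).trans_le (Nat.le_add_right _ _)
  · intro x hx y hy
    rw [hval, hval, keyRank_lt_keyRank_iff hkey, gatherKey_of_notMem hx, gatherKey_of_notMem hy,
      Nat.add_lt_add_iff_left]

lemma isCyclicInterval_image_gatherDrawing_self (hσ : Injective σ) (hC : C.Nonempty) :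
    IsCyclicInterval (gatherDrawing σ C u '' C) := by
  refine isCyclicInterval_image_keyRank (gatherKey_injective hσ) hC fun x _ z hz y _ hyz => ?_
  by_contra hy
  have := gatherKey_lt_of_mem (σ := σ) (u := u) hz
  rw [gatherKey_of_notMem hy] at hyz
  omega

lemma isCyclicInterval_image_gatherDrawing (hσ : Injective σ) (hu : u ∈ C) {S : Set V}
    (hSC : ∀ x ∈ S, x ∉ C) (hS : IsCyclicInterval (σ '' S)) (hne : S.Nonempty) :
    IsCyclicInterval (gatherDrawing σ C u '' S) := by
  have hρS : IsCyclicInterval ((fun x => σ x - σ u) '' S) := by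
    rw [← Set.image_image (fun z => z - σ u) σ]
    exact hS.image_sub_const _
  have h0 : (0 : ZMod n) ∉ (fun x => σ x - σ u) '' S := fun ⟨x, hx, h⟩ =>
    hSC x hx (hσ (sub_eq_zero.1 h) ▸ hu)
  refine isCyclicInterval_image_keyRank (gatherKey_injective hσ) hne
    fun x hx z hz y hxy hyz => ?_
  have hy : y ∉ C := fun hy => by
    have := gatherKey_lt_of_mem (σ := σ) (u := u) hy
    rw [gatherKey_of_notMem (hSC x hx)] at hxy
    omega
  rw [gatherKey_of_notMem (hSC x hx), gatherKey_of_notMem hy] at hxy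
  rw [gatherKey_of_notMem hy, gatherKey_of_notMem (hSC z hz)] at hyz
  obtain ⟨y', hy', hyy'⟩ := hρS.mem_of_val_le_of_le h0 (s := σ x - σ u) (t := σ z - σ u)
    (z := σ y - σ u) ⟨x, hx, rfl⟩ ⟨z, hz, rfl⟩ (by omega) (by omega)
  exact hσ (sub_left_injective hyy') ▸ hy'

end GatherDrawing

section TwinClass

variable {V : Type*} [Fintype V] {G : SimpleGraph V} {u v : V}

open Classical in
noncomputable def twinClass (G : SimpleGraph V) (v : V) : Finset V :=
  {u | G.neighborSet u = G.neighborSet v}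

lemma mem_twinClass : u ∈ twinClass G v ↔ G.neighborSet u = G.neighborSet v := by
  simp [twinClass]

lemma coe_twinClass : (twinClass G v : Set V) = {u | G.neighborSet u = G.neighborSet v} := by
  ext u
  exact mem_twinClass

lemma isTwinSet_twinClass : IsTwinSet G (twinClass G v) := fun w hw w' hw' x => by
  rw [← SimpleGraph.mem_neighborSet, ← SimpleGraph.mem_neighborSet, mem_twinClass.1 hw,
    mem_twinClass.1 hw']

variable {n : ℕ} [NeZero n] {σ : V → ZMod n}

theorem exists_injective_convexCr_le_twinClass (G : SimpleGraph V) (hn : Fintype.card V ≤ n)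
    (hσ : Injective σ) (v : V) :
    ∃ τ : V → ZMod n, Injective τ ∧ convexCr G σ ≤ convexCr G τ ∧
      IsCyclicInterval (τ '' twinClass G v) ∧
      ∀ w, IsCyclicInterval (σ '' twinClass G w) → IsCyclicInterval (τ '' twinClass G w) := by
  have hv : v ∈ twinClass G v := mem_twinClass.2 rfl
  obtain ⟨u, hu, hmax⟩ :=
    exists_max_image (twinClass G v) (fun w => #(starCrossings G σ (twinClass G v) w)) ⟨v, hv⟩
  refine ⟨gatherDrawing σ (twinClass G v) u, gatherDrawing_injective hn hσ,
    convexCr_le_convexCr_gatherDrawing hn isTwinSet_twinClass hσ hu hmax,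
    isCyclicInterval_image_gatherDrawing_self hσ ⟨v, hv⟩, fun w hw => ?_⟩
  by_cases hwv : G.neighborSet w = G.neighborSet v
  · rw [show twinClass G w = twinClass G v by ext; simp only [mem_twinClass, hwv]]
    exact isCyclicInterval_image_gatherDrawing_self hσ ⟨v, hv⟩
  · refine isCyclicInterval_image_gatherDrawing hσ hu (fun x hx hx' => hwv ?_) hw
      ⟨w, mem_twinClass.2 rfl⟩
    exact (mem_twinClass.1 hx).symm.trans (mem_twinClass.1 hx')

theorem exists_injective_convexCr_le_forall_twinClass (G : SimpleGraph V)
    (hn : Fintype.card V ≤ n) (hσ : Injective σ) :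
    ∃ τ : V → ZMod n, Injective τ ∧ convexCr G σ ≤ convexCr G τ ∧
      ∀ v, IsCyclicInterval (τ '' twinClass G v) := by
  classical
  induction hk : #{v | ¬ IsCyclicInterval (σ '' twinClass G v)} using Nat.strong_induction_on
    generalizing σ with
  | _ k ih =>
  by_cases hbad : ∃ v, ¬ IsCyclicInterval (σ '' twinClass G v)
  · obtain ⟨v, hv⟩ := hbad
    obtain ⟨τ, hτ, hστ, hτv, hkeep⟩ := exists_injective_convexCr_le_twinClass G hn hσ v
    have hlt : #{w | ¬ IsCyclicInterval (τ '' twinClass G w)} < k := hk ▸ card_lt_card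
      ((ssubset_iff_of_subset fun w => by simpa using mt (hkeep w)).2 ⟨v, by simpa, by simpa⟩)
    obtain ⟨ρ, hρ, hτρ, hall⟩ := ih _ hlt hτ rfl
    exact ⟨ρ, hρ, hστ.trans hτρ, hall⟩
  · simp only [not_exists, not_not] at hbad
    exact ⟨σ, hσ, le_rfl, hbad⟩

end TwinClass

/-- Every finite simple graph has a crossing-maximal convex drawing in which each twin
class (vertices with identical neighborhoods) occupies a set of consecutive positions. -/
theorem exists_max_convex_drawing_with_consecutive_twins {V : Type*} [Fintype V]
    (G : SimpleGraph V) :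
    ∃ σ : V → ZMod (Fintype.card V), Function.Injective σ ∧
      (∀ τ : V → ZMod (Fintype.card V), Function.Injective τ →
        convexCr G τ ≤ convexCr G σ) ∧
      (∀ v : V, IsCyclicInterval (σ '' {u : V | G.neighborSet u = G.neighborSet v})) := by
  cases isEmpty_or_nonempty V
  · exact ⟨isEmptyElim, fun x => isEmptyElim x,
      fun τ _ => Subsingleton.elim τ isEmptyElim ▸ le_rfl, fun v => isEmptyElim v⟩
  have : NeZero (Fintype.card V) := ⟨Fintype.card_ne_zero⟩
  obtain ⟨σ, hσ, hmax⟩ := Set.exists_max_image {σ : V → ZMod (Fintype.card V) | Injective σ}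
    (convexCr G) (Set.toFinite _)
    ⟨_, ((Fintype.equivFin V).trans (ZMod.finEquiv _).toEquiv).injective⟩
  obtain ⟨τ, hτ, hστ, hint⟩ := exists_injective_convexCr_le_forall_twinClass G le_rfl hσ
  refine ⟨τ, hτ, fun ρ hρ => (hmax ρ hρ).trans hστ, fun v => ?_⟩
  rw [← coe_twinClass]
  exact hint v
end

section
/- Let σ be a convex drawing of the graph H and let e be a cycle edge of H whose span s (with respect to the induced cyclic order of the nine cycle vertices v₀, …, v₈) satisfies s ∈ {0, 1, 2}. Then e avoids at least 6 − 2s cycle edges of H in σ. -/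
/-- The graph `H`: a 9-cycle on the vertices `0, …, 8` (representing `v₀, …, v₈`)
together with a central vertex `9` (representing `z`) adjacent to `0`, `3` and `6`. -/
def graphH : SimpleGraph (Fin 10) :=
  SimpleGraph.fromEdgeSet
    {s((0 : Fin 10), 1), s((1 : Fin 10), 2), s((2 : Fin 10), 3), s((3 : Fin 10), 4),
     s((4 : Fin 10), 5), s((5 : Fin 10), 6), s((6 : Fin 10), 7), s((7 : Fin 10), 8),
     s((8 : Fin 10), 0), s((9 : Fin 10), 0), s((9 : Fin 10), 3), s((9 : Fin 10), 6)}

/-- The nine cycle edges of `H`. -/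
def cycleEdgesH : Set (Sym2 (Fin 10)) :=
  {s((0 : Fin 10), 1), s((1 : Fin 10), 2), s((2 : Fin 10), 3), s((3 : Fin 10), 4),
   s((4 : Fin 10), 5), s((5 : Fin 10), 6), s((6 : Fin 10), 7), s((7 : Fin 10), 8),
   s((8 : Fin 10), 0)}

/-- The number of cycle vertices of `H` (the vertices `0,…,8`) other than `a` and `b` lying
on the open cyclic arc from `σ a` to `σ b`. -/
noncomputable def arcVertexCount (σ : Fin 10 → ZMod (Fintype.card (Fin 10)))
    (a b : Fin 10) : ℕ :=
  {u : Fin 10 | u.val < 9 ∧ u ≠ a ∧ u ≠ b ∧ InArc (σ a) (σ b) (σ u)}.ncard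

/-! The seven cycle vertices off a cycle edge `e` form a path of six cycle edges disjoint from
`e`, and a path edge can cross `e` only where the path switches between the two arcs that `e`
cuts off the circle. If `k` path vertices lie on one arc, every maximal run of them causes at most
two switches, so there are at most `2 * min k (7 - k)` switches, and the remaining
`6 - 2 * min k (7 - k)` path edges avoid `e`. -/

open Finset

instance {n : ℕ} (x y z : ZMod n) : Decidable (InArc x y z) :=
  inferInstanceAs (Decidable (_ ∧ _))

theorem inArc_swap_iff {n : ℕ} [NeZero n] {x y z : ZMod n} (hxy : x ≠ y) (hzx : z ≠ x)
    (hzy : z ≠ y) : InArc y x z ↔ ¬ InArc x y z := by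
  have hzy' : z - y = (z - x) - (y - x) := by ring
  have hxy' : x - y = -(y - x) := by ring
  rw [InArc, InArc, hzy', hxy']
  replace hzy : z - x ≠ y - x := by simpa using hzy
  rw [ne_comm, ← sub_ne_zero] at hxy
  rw [← sub_ne_zero] at hzx
  generalize y - x = p at *
  generalize z - x = q at *
  have hp := (ZMod.val_ne_zero p).mpr hxy
  have hq := (ZMod.val_ne_zero q).mpr hzx
  have hpq : q.val ≠ p.val := (ZMod.val_injective n).ne hzy
  have := ZMod.val_lt q
  rw [ZMod.neg_val, if_neg hxy]
  rcases le_or_gt p.val q.val with h | h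
  · rw [ZMod.val_sub h]
    omega
  · rw [← neg_sub, ZMod.neg_val, if_neg (sub_ne_zero.mpr hzy.symm), ZMod.val_sub h.le]
    omega

theorem not_convexCross_of_inArc_iff {V : Type*} {n : ℕ} [NeZero n] {σ : V → ZMod n}
    (hσ : Function.Injective σ) {a b c d : V} (hab : a ≠ b) (hc : c ∉ s(a, b))
    (hd : d ∉ s(a, b)) (h : InArc (σ a) (σ b) (σ c) ↔ InArc (σ a) (σ b) (σ d)) :
    ¬ ConvexCross σ s(a, b) s(c, d) := by
  simp only [Sym2.mem_iff, not_or] at hc hd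
  have swap : ∀ {z}, z ≠ a → z ≠ b → (InArc (σ b) (σ a) (σ z) ↔ ¬ InArc (σ a) (σ b) (σ z)) :=
    fun hza hzb => inArc_swap_iff (hσ.ne hab) (hσ.ne hza) (hσ.ne hzb)
  rintro ⟨-, a', b', c', d', he, hf, hx⟩
  rcases Sym2.eq_iff.mp he with ⟨rfl, rfl⟩ | ⟨rfl, rfl⟩ <;>
    rcases Sym2.eq_iff.mp hf with ⟨rfl, rfl⟩ | ⟨rfl, rfl⟩ <;>
    simp only [swap hc.1 hc.2, swap hd.1 hd.2, h] at hx <;>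
    exact (xor_self _).mp hx

/-- A maximal run of `p` causes at most two switches, and only one if it reaches an end. -/
theorem card_not_iff_succ_add_ite_le {m : ℕ} (p : Fin (m + 1) → Prop) [DecidablePred p] :
    #{j : Fin m | ¬(p j.castSucc ↔ p j.succ)} + (if p 0 then 1 else 0) +
      (if p (Fin.last m) then 1 else 0) ≤ 2 * #{j | p j} := by
  induction m with
  | zero => rw [Fin.card_filter_univ_succ, Fin.last_zero]; split_ifs <;> simp
  | succ m ih =>
    have := ih (fun j => p j.succ)
    rw [Fin.card_filter_univ_succ, Fin.card_filter_univ_succ (p := p)]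
    simp only [Fin.succ_castSucc, ← Fin.succ_last, Fin.castSucc_zero, Fin.succ_zero_eq_one]
      at this ⊢
    by_cases h0 : p 0 <;> by_cases h1 : p 1 <;>
      simp only [h0, h1, if_true, if_false, iff_true, iff_false, not_true, not_false_eq_true]
        at this ⊢ <;>
      omega

theorem sub_two_mul_min_le_card_iff_succ {m : ℕ} (p : Fin (m + 1) → Prop) [DecidablePred p] :
    m - 2 * min #{j | p j} #{j | ¬ p j} ≤ #{j : Fin m | p j.castSucc ↔ p j.succ} := by
  have hp := card_not_iff_succ_add_ite_le p
  have hnp := card_not_iff_succ_add_ite_le (fun j => ¬ p j)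
  have hsplit := card_filter_add_card_filter_not (s := (univ : Finset (Fin m)))
    (fun j => p j.castSucc ↔ p j.succ)
  simp only [not_iff_not, card_univ, Fintype.card_fin] at hnp hsplit
  omega

theorem Function.Injective.sym2_castSucc_succ {V : Type*} {m : ℕ} {w : Fin (m + 1) → V}
    (hw : Function.Injective w) :
    Function.Injective fun j : Fin m => s(w j.castSucc, w j.succ) := by
  intro i j h
  rcases Sym2.eq_iff.mp h with ⟨h, -⟩ | ⟨h₁, h₂⟩
  · exact Fin.castSucc_injective _ (hw h)
  · have h₁ := congrArg Fin.val (hw h₁)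
    have h₂ := congrArg Fin.val (hw h₂)
    simp only [Fin.val_castSucc, Fin.val_succ] at h₁ h₂
    omega

theorem sym2Indep_of_notMem {V : Type*} {e : Sym2 V} {c d : V} (hc : c ∉ e) (hd : d ∉ e) :
    Sym2Indep e s(c, d) := by
  rintro x hx hx'
  rcases Sym2.mem_iff.mp hx' with rfl | rfl
  exacts [hc hx, hd hx]

theorem sub_two_mul_min_le_ncard_not_convexCross {V : Type*} {n : ℕ} [NeZero n]
    {σ : V → ZMod n} (hσ : Function.Injective σ) {C : Set (Sym2 V)} (hC : C.Finite)
    {a b : V} (hab : a ≠ b) {m : ℕ} {w : Fin (m + 1) → V} (hw : Function.Injective w)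
    (hwab : ∀ j, w j ∉ s(a, b)) (hwC : ∀ j : Fin m, s(w j.castSucc, w j.succ) ∈ C) :
    m - 2 * min #{j | InArc (σ a) (σ b) (σ (w j))} #{j | InArc (σ b) (σ a) (σ (w j))} ≤
      {f ∈ C | Sym2Indep s(a, b) f ∧ ¬ ConvexCross σ s(a, b) f}.ncard := by
  have hwa j : w j ≠ a := fun h => hwab j (h ▸ Sym2.mem_mk_left a b)
  have hwb j : w j ≠ b := fun h => hwab j (h ▸ Sym2.mem_mk_right a b)
  have hswap : #{j | InArc (σ b) (σ a) (σ (w j))} = #{j | ¬ InArc (σ a) (σ b) (σ (w j))} :=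
    congrArg card <| filter_congr fun j _ =>
      inArc_swap_iff (hσ.ne hab) (hσ.ne (hwa j)) (hσ.ne (hwb j))
  have hsub : (fun j : Fin m => s(w j.castSucc, w j.succ)) ''
        {j | InArc (σ a) (σ b) (σ (w j.castSucc)) ↔ InArc (σ a) (σ b) (σ (w j.succ))} ⊆
      {f ∈ C | Sym2Indep s(a, b) f ∧ ¬ ConvexCross σ s(a, b) f} := by
    rintro _ ⟨j, hj, rfl⟩
    exact ⟨hwC j, sym2Indep_of_notMem (hwab _) (hwab _),
      not_convexCross_of_inArc_iff hσ hab (hwab _) (hwab _) hj⟩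
  calc m - 2 * min #{j | InArc (σ a) (σ b) (σ (w j))} #{j | InArc (σ b) (σ a) (σ (w j))}
      ≤ #{j : Fin m | InArc (σ a) (σ b) (σ (w j.castSucc)) ↔ InArc (σ a) (σ b) (σ (w j.succ))} :=
        hswap ▸ sub_two_mul_min_le_card_iff_succ _
    _ = ((fun j : Fin m => s(w j.castSucc, w j.succ)) ''
          {j | InArc (σ a) (σ b) (σ (w j.castSucc)) ↔ InArc (σ a) (σ b) (σ (w j.succ))}).ncard := by
        rw [Set.ncard_image_of_injective _ hw.sym2_castSucc_succ, ← Set.ncard_coe_finset,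
          coe_filter_univ]
    _ ≤ _ := Set.ncard_le_ncard hsub (hC.subset (Set.sep_subset _ _))

theorem cycleEdgesH_eq_range :
    cycleEdgesH = Set.range fun k : Fin 9 => s(k.castSucc, (k + 1).castSucc) := by
  ext f
  simp only [cycleEdgesH, Set.mem_insert_iff, Set.mem_singleton_iff, Set.mem_range,
    Fin.exists_fin_succ, Fin.exists_fin_zero]
  constructor
  · rintro (h | h | h | h | h | h | h | h | h) <;> subst h <;> decide
  · rintro (h | h | h | h | h | h | h | h | h | h) <;> first | exact h.elim | (subst h; decide)

theorem exists_path_of_mem_cycleEdgesH {e : Sym2 (Fin 10)} (he : e ∈ cycleEdgesH) :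
    ¬ e.IsDiag ∧ ∃ w : Fin 7 → Fin 10, Function.Injective w ∧
      (∀ j : Fin 6, s(w j.castSucc, w j.succ) ∈ cycleEdgesH) ∧
      ∀ u, (∃ j, w j = u) ↔ u.val < 9 ∧ u ∉ e := by
  rw [cycleEdgesH_eq_range] at he ⊢
  obtain ⟨k, rfl⟩ := he
  -- the cycle vertices off the edge, in cyclic order starting right after it
  refine ⟨?_, fun j => (k + 2 + Fin.castLE (by norm_num) j).castSucc, ?_, ?_, ?_⟩ <;>
    revert k <;> decide

theorem arcVertexCount_eq_card {σ : Fin 10 → ZMod (Fintype.card (Fin 10))} {a b : Fin 10}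
    {w : Fin 7 → Fin 10} (hw : Function.Injective w)
    (hrange : ∀ u, (∃ j, w j = u) ↔ u.val < 9 ∧ u ∉ s(a, b)) :
    arcVertexCount σ a b = #{j | InArc (σ a) (σ b) (σ (w j))} := by
  have : {u : Fin 10 | u.val < 9 ∧ u ≠ a ∧ u ≠ b ∧ InArc (σ a) (σ b) (σ u)} =
      w '' {j | InArc (σ a) (σ b) (σ (w j))} := by
    ext u
    have := hrange u
    simp only [Sym2.mem_iff, not_or] at this
    constructor
    · rintro ⟨h9, ha, hb, hu⟩
      obtain ⟨j, rfl⟩ := this.mpr ⟨h9, ha, hb⟩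
      exact ⟨j, hu, rfl⟩
    · rintro ⟨j, hj, rfl⟩
      obtain ⟨h9, ha, hb⟩ := this.mp ⟨j, rfl⟩
      exact ⟨h9, ha, hb, hj⟩
  rw [arcVertexCount, this, Set.ncard_image_of_injective _ hw, ← Set.ncard_coe_finset,
    coe_filter_univ]

theorem cycle_edge_span_avoidances_general
    (σ : Fin 10 → ZMod (Fintype.card (Fin 10))) (hσ : Function.Injective σ)
    (a b : Fin 10) (he : s(a, b) ∈ cycleEdgesH) (s : ℕ)
    (hs : s = min (arcVertexCount σ a b) (arcVertexCount σ b a)) :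
    6 - 2 * s ≤
      {f ∈ cycleEdgesH | Sym2Indep s(a, b) f ∧ ¬ ConvexCross σ s(a, b) f}.ncard := by
  obtain ⟨hab, w, hw, hwC, hrange⟩ := exists_path_of_mem_cycleEdgesH he
  have hrange' : ∀ u, (∃ j, w j = u) ↔ u.val < 9 ∧ u ∉ s(b, a) := by
    simpa only [Sym2.eq_swap] using hrange
  rw [hs, arcVertexCount_eq_card hw hrange, arcVertexCount_eq_card hw hrange']
  exact sub_two_mul_min_le_ncard_not_convexCross hσ (Set.toFinite _)
    (Sym2.mk_isDiag_iff.not.mp hab) hw (fun j => ((hrange _).mp ⟨j, rfl⟩).2) hwC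

/-- In any convex drawing of `H`, a cycle edge of span `s ≤ 2` avoids at least `6 - 2s`
cycle edges. -/
theorem cycle_edge_span_avoidances
    (σ : Fin 10 → ZMod (Fintype.card (Fin 10))) (hσ : Function.Injective σ)
    (a b : Fin 10) (he : s(a, b) ∈ cycleEdgesH) (s : ℕ)
    (hs : s = min (arcVertexCount σ a b) (arcVertexCount σ b a)) (hs2 : s ≤ 2) :
    6 - 2 * s ≤
      {f ∈ cycleEdgesH | Sym2Indep s(a, b) f ∧ ¬ ConvexCross σ s(a, b) f}.ncard :=
  cycle_edge_span_avoidances_general σ hσ a b he s hs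
end
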